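/- Let V be a finite-dimensional real inner product space, W a finite group of linear isometries of V, σ : W → {+1, −1} a group homomorphism, and M ≥ 1 an integer; for b ∈ V define φ^σ_b : V → ℂ by φ^σ_b(a) = Σ_{w ∈ W} σ(w)·exp(2πi⟨w·b, a⟩). Let Q∨ ⊆ P∨ be W-invariant additive subgroups of V, let P be an additive subgroup of V with ⟨λ, q⟩ ∈ ℤ for all λ ∈ P and q ∈ Q∨, and set Q = {v ∈ V : ⟨v, p⟩ ∈ ℤ for all p ∈ P∨}. Let ρ ∈ V satisfy ρ − w·ρ ∈ P for all w ∈ W, let ρ∨ ∈ V satisfy ρ∨ − w·ρ∨ ∈ P∨ for all w ∈ W, and let b, b' ∈ ρ + P. Let Y be a finite subset of V such that y ↦ y + Q∨ is a bijection from Y onto the set of cosets {v + Q∨ : v ∈ V, M·v − ρ∨ ∈ P∨}. If b − w·b' ∉ M·Q for every w ∈ W, then Σ_{y ∈ Y} φ^σ_b(y)·conj(φ^σ_{b'}(y)) = 0. -/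

import Mathlib

/-- The orbit function `φ^σ_b(a) = Σ_{w ∈ W} σ(w) · exp(2πi⟪w b, a⟫)` attached to a
finite group `W` of linear isometries and a sign homomorphism `σ : W → {±1}`. -/
noncomputable def orbitFn {V : Type*} [NormedAddCommGroup V] [InnerProductSpace ℝ V]
    (W : Subgroup (V ≃ₗᵢ[ℝ] V)) [Fintype W] (σ : W →* ℤˣ) (b a : V) : ℂ :=
  ∑ w : W, ((σ w : ℤ) : ℂ) *
    Complex.exp (2 * Real.pi * Complex.I * ((inner ℝ ((w : V ≃ₗᵢ[ℝ] V) b) a : ℝ) : ℂ))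

/-!
After expanding the product, the sum becomes a signed combination of the exponential sums
`Σ_{y ∈ Y} exp(2πi⟪c, y⟫)` with `c = w b - w' b'`. Such a `c` pairs integrally with `Q∨`, so
`exp(2πi⟪c, ·⟫)` is a function on `V ⧸ Q∨`, and the grid `{v : M v - ρ∨ ∈ P∨} ⧸ Q∨` indexed by `Y`
is stable under translation by `t = p / M` for every `p ∈ P∨`. The hypothesis `b - w b' ∉ M Q`
yields such a `p` with `⟪c, t⟫ ∉ ℤ`; translating by `t` multiplies the sum by
`exp(2πi⟪c, t⟫) ≠ 1`, so the sum vanishes.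
-/

open Complex Finset
open scoped Real InnerProductSpace ComplexConjugate

theorem Finset.sum_eq_zero_of_add_mem_iff {A R : Type*} [AddGroup A] [CommRing R]
    [NoZeroDivisors R] {s : Finset A} {f : A → R} {a : A} {ζ : R}
    (hs : ∀ x, x + a ∈ s ↔ x ∈ s) (hf : ∀ x, f (x + a) = ζ * f x) (hζ : ζ ≠ 1) :
    ∑ x ∈ s, f x = 0 := by
  have hfix : ζ * ∑ x ∈ s, f x = ∑ x ∈ s, f x := calc
    ζ * ∑ x ∈ s, f x = ∑ x ∈ s, f (x + a) := by simp only [hf, mul_sum]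
    _ = ∑ x ∈ s, f x := sum_equiv (Equiv.addRight a) (fun x => (hs x).symm) fun _ _ => rfl
  have : (ζ - 1) * ∑ x ∈ s, f x = 0 := by rw [sub_mul, one_mul, hfix, sub_self]
  exact (mul_eq_zero.mp this).resolve_left (sub_ne_zero.mpr hζ)

theorem sum_eq_zero_of_bijOn_mk {G R : Type*} [AddCommGroup G] [CommRing R]
    [NoZeroDivisors R] {H : AddSubgroup G} {Y : Finset G} {S : Set (G ⧸ H)}
    (hY : Set.BijOn (QuotientAddGroup.mk : G → G ⧸ H) Y S) {f : G → R}
    (hper : ∀ x, ∀ h ∈ H, f (x + h) = f x) {a : G} (hS : ∀ x, x + (a : G ⧸ H) ∈ S ↔ x ∈ S)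
    {ζ : R} (hf : ∀ x, f (x + a) = ζ * f x) (hζ : ζ ≠ 1) : ∑ y ∈ Y, f y = 0 := by
  classical
  let g : G ⧸ H → R := fun x => Quotient.liftOn' x f fun x y hxy => by
    rw [QuotientAddGroup.leftRel_apply] at hxy
    simpa using (hper x _ hxy).symm
  have hg : ∀ x : G, g x = f x := fun _ => rfl
  have himage : (↑(Y.image (QuotientAddGroup.mk : G → G ⧸ H)) : Set (G ⧸ H)) = S := by
    rw [coe_image, hY.image_eq]
  calc ∑ y ∈ Y, f y = ∑ x ∈ Y.image (QuotientAddGroup.mk : G → G ⧸ H), g x := by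
        rw [sum_image hY.injOn]; rfl
    _ = 0 := by
      refine sum_eq_zero_of_add_mem_iff (a := (a : G ⧸ H)) (ζ := ζ) (fun x => ?_) (fun x => ?_) hζ
      · rw [← mem_coe, ← mem_coe, himage, hS]
      · induction x using QuotientAddGroup.induction_on with
        | H x => rw [← QuotientAddGroup.mk_add, hg, hg, hf]

theorem exp_two_pi_I_mul_add_intCast (r : ℝ) (m : ℤ) :
    exp (2 * π * I * ((r + m : ℝ) : ℂ)) = exp (2 * π * I * r) := by
  push_cast
  rw [mul_add, exp_add, mul_comm (2 * π * I : ℂ) m, exp_int_mul_two_pi_mul_I, mul_one]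

theorem exp_two_pi_I_mul_ne_one {r : ℝ} (hr : ¬∃ m : ℤ, r = m) : exp (2 * π * I * r) ≠ 1 := by
  rw [Ne, exp_eq_one_iff]
  rintro ⟨m, hm⟩
  refine hr ⟨m, ?_⟩
  have h2πI : (2 * π * I : ℂ) ≠ 0 := by simp [Real.pi_ne_zero]
  exact_mod_cast mul_left_cancel₀ h2πI (hm.trans (mul_comm _ _))

section InnerProductSpace

variable {V : Type*} [NormedAddCommGroup V] [InnerProductSpace ℝ V]

def integralDual (L : AddSubgroup V) : AddSubgroup V where
  carrier := {v | ∀ q ∈ L, ∃ m : ℤ, ⟪v, q⟫_ℝ = m}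
  zero_mem' q _ := ⟨0, by simp⟩
  add_mem' {u v} hu hv q hq := by
    obtain ⟨m, hm⟩ := hu q hq
    obtain ⟨n, hn⟩ := hv q hq
    exact ⟨m + n, by rw [inner_add_left, hm, hn]; push_cast; ring⟩
  neg_mem' {v} hv q hq := by
    obtain ⟨m, hm⟩ := hv q hq
    exact ⟨-m, by rw [inner_neg_left, hm]; push_cast; ring⟩

theorem apply_mem_integralDual {W : Subgroup (V ≃ₗᵢ[ℝ] V)} {L : AddSubgroup V}
    (hL : ∀ w : W, ∀ q ∈ L, (w : V ≃ₗᵢ[ℝ] V) q ∈ L) (w : W) {v : V}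
    (hv : v ∈ integralDual L) : (w : V ≃ₗᵢ[ℝ] V) v ∈ integralDual L := by
  intro q hq
  rw [LinearIsometryEquiv.inner_map_eq_flip]
  exact hv _ (hL w⁻¹ q hq)

theorem apply_sub_mem_integralDual {W : Subgroup (V ≃ₗᵢ[ℝ] V)} {L P : AddSubgroup V}
    (hL : ∀ w : W, ∀ q ∈ L, (w : V ≃ₗᵢ[ℝ] V) q ∈ L) (hP : P ≤ integralDual L) {ρ x : V}
    (hρ : ∀ w : W, ρ - (w : V ≃ₗᵢ[ℝ] V) ρ ∈ P) (hx : x - ρ ∈ P) (w : W) :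
    (w : V ≃ₗᵢ[ℝ] V) x - ρ ∈ integralDual L := by
  have hsplit : (w : V ≃ₗᵢ[ℝ] V) x - ρ =
      (w : V ≃ₗᵢ[ℝ] V) (x - ρ) - (ρ - (w : V ≃ₗᵢ[ℝ] V) ρ) := by
    rw [map_sub]; abel
  rw [hsplit]
  exact sub_mem (apply_mem_integralDual hL w (hP hx)) (hP (hρ w))

/-- The paper's grid `(1/r)(ρv + K) / L`. -/
def shiftedGrid (L K : AddSubgroup V) (r : ℝ) (ρv : V) : Set (V ⧸ L) :=
  {x | ∃ v : V, r • v - ρv ∈ K ∧ QuotientAddGroup.mk v = x}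

theorem add_mk_mem_shiftedGrid_iff {L K : AddSubgroup V} {r : ℝ} {ρv t : V} (ht : r • t ∈ K)
    (x : V ⧸ L) :
    x + (t : V ⧸ L) ∈ shiftedGrid L K r ρv ↔ x ∈ shiftedGrid L K r ρv := by
  constructor
  · rintro ⟨v, hv, hvx⟩
    refine ⟨v - t, ?_, ?_⟩
    · rw [smul_sub, sub_right_comm]
      exact sub_mem hv ht
    · rw [QuotientAddGroup.mk_sub, hvx, add_sub_cancel_right]
  · rintro ⟨v, hv, rfl⟩
    refine ⟨v + t, ?_, QuotientAddGroup.mk_add _ _ _⟩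
    rw [smul_add, add_sub_right_comm]
    exact add_mem hv ht

theorem sum_exp_inner_eq_zero {L K : AddSubgroup V} {r : ℝ} {ρv : V} {Y : Finset V}
    (hY : Set.BijOn (QuotientAddGroup.mk : V → V ⧸ L) Y (shiftedGrid L K r ρv))
    {c t : V} (hc : c ∈ integralDual L) (ht : r • t ∈ K) (hct : ¬∃ m : ℤ, ⟪c, t⟫_ℝ = m) :
    ∑ y ∈ Y, exp (2 * π * I * (⟪c, y⟫_ℝ : ℂ)) = 0 := by
  refine sum_eq_zero_of_bijOn_mk hY (fun x q hq => ?_) (add_mk_mem_shiftedGrid_iff ht)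
    (fun x => ?_) (exp_two_pi_I_mul_ne_one hct)
  · obtain ⟨m, hm⟩ := hc q hq
    rw [inner_add_right, hm, exp_two_pi_I_mul_add_intCast]
  · rw [inner_add_right, ← exp_add]
    push_cast
    ring_nf

end InnerProductSpace

theorem exp_two_pi_I_mul_mul_conj (r s : ℝ) :
    exp (2 * π * I * r) * conj (exp (2 * π * I * s)) = exp (2 * π * I * ((r - s : ℝ) : ℂ)) := by
  rw [← exp_conj, ← exp_add]
  congr 1
  simp only [map_mul, conj_ofReal, conj_I, map_ofNat]
  push_cast
  ring

theorem orbitFn_mul_conj {V : Type*} [NormedAddCommGroup V] [InnerProductSpace ℝ V]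
    (W : Subgroup (V ≃ₗᵢ[ℝ] V)) [Fintype W] (σ : W →* ℤˣ) (b b' y : V) :
    orbitFn W σ b y * conj (orbitFn W σ b' y) = ∑ w : W, ∑ w' : W,
      ((σ w : ℤ) : ℂ) * ((σ w' : ℤ) : ℂ) *
        exp (2 * π * I * (⟪(w : V ≃ₗᵢ[ℝ] V) b - (w' : V ≃ₗᵢ[ℝ] V) b', y⟫_ℝ : ℂ)) := by
  rw [orbitFn, orbitFn, map_sum, sum_mul_sum]
  refine sum_congr rfl fun w _ => sum_congr rfl fun w' _ => ?_
  rw [map_mul, map_intCast, inner_sub_left, ← exp_two_pi_I_mul_mul_conj]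
  ring

theorem stmt_17_general {V : Type*} [NormedAddCommGroup V] [InnerProductSpace ℝ V]
    (W : Subgroup (V ≃ₗᵢ[ℝ] V)) [Fintype W] (σ : W →* ℤˣ) (M : ℕ) (hM : 1 ≤ M)
    (Qv Pv : AddSubgroup V)
    (hQvW : ∀ w : W, ∀ q ∈ Qv, (w : V ≃ₗᵢ[ℝ] V) q ∈ Qv)
    (hPvW : ∀ w : W, ∀ p ∈ Pv, (w : V ≃ₗᵢ[ℝ] V) p ∈ Pv)
    (P : AddSubgroup V) (hdual : ∀ l ∈ P, ∀ q ∈ Qv, ∃ m : ℤ, (inner ℝ l q : ℝ) = m)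
    (Q : Set V) (hQ : Q = {v : V | ∀ p ∈ Pv, ∃ m : ℤ, (inner ℝ v p : ℝ) = m})
    (ρ : V) (hρ : ∀ w : W, ρ - (w : V ≃ₗᵢ[ℝ] V) ρ ∈ P)
    (ρv : V)
    (b b' : V) (hb : b - ρ ∈ P) (hb' : b' - ρ ∈ P)
    (Y : Finset V)
    (hY : Set.BijOn (fun y => (QuotientAddGroup.mk y : V ⧸ Qv)) ↑Y
      {x : V ⧸ Qv | ∃ v : V, (M : ℝ) • v - ρv ∈ Pv ∧ QuotientAddGroup.mk v = x})
    (hne : ∀ w : W, ¬ ∃ q ∈ Q, b - (w : V ≃ₗᵢ[ℝ] V) b' = (M : ℝ) • q) :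
    ∑ y ∈ Y, orbitFn W σ b y * (starRingEnd ℂ) (orbitFn W σ b' y) = 0 := by
  have hM0 : (M : ℝ) ≠ 0 := by positivity
  simp_rw [orbitFn_mul_conj, sum_comm (s := Y), ← mul_sum]
  refine sum_eq_zero fun w _ => sum_eq_zero fun w' _ => ?_
  set c := (w : V ≃ₗᵢ[ℝ] V) b - (w' : V ≃ₗᵢ[ℝ] V) b'
  have hc : c ∈ integralDual Qv := by
    have hPQv : P ≤ integralDual Qv := hdual
    simpa [c] using sub_mem (apply_sub_mem_integralDual hQvW hPQv hρ hb w)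
      (apply_sub_mem_integralDual hQvW hPQv hρ hb' w')
  obtain ⟨p, hp, hcp⟩ : ∃ p ∈ Pv, ¬∃ m : ℤ, ⟪c, (M : ℝ)⁻¹ • p⟫_ℝ = m := by
    by_contra! h
    refine hne (w⁻¹ * w') ⟨(M : ℝ)⁻¹ • ((w⁻¹ : W) : V ≃ₗᵢ[ℝ] V) c, ?_, ?_⟩
    · rw [hQ, ← map_smul]
      refine apply_mem_integralDual hPvW w⁻¹ fun p hp => ?_
      simpa [real_inner_smul_left, real_inner_smul_right] using h p hp
    · simp [c, smul_smul, hM0]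
  rw [sum_exp_inner_eq_zero hY hc (by rwa [smul_inv_smul₀ hM0]) hcp, mul_zero]

/-- the off-diagonal case of the discrete orthogonality of orbit
functions: in the situation of Statement 16, if `b - w·b' ∉ M·Q` for every `w ∈ W`,
then `Σ_{y ∈ Y} φ^σ_b(y) conj(φ^σ_{b'}(y)) = 0`. -/
theorem stmt_17 {V : Type*} [NormedAddCommGroup V] [InnerProductSpace ℝ V]
    [FiniteDimensional ℝ V]
    (W : Subgroup (V ≃ₗᵢ[ℝ] V)) [Fintype W] (σ : W →* ℤˣ) (M : ℕ) (hM : 1 ≤ M)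
    (Qv Pv : AddSubgroup V) (hQvPv : Qv ≤ Pv)
    (hQvW : ∀ w : W, ∀ q ∈ Qv, (w : V ≃ₗᵢ[ℝ] V) q ∈ Qv)
    (hPvW : ∀ w : W, ∀ p ∈ Pv, (w : V ≃ₗᵢ[ℝ] V) p ∈ Pv)
    (P : AddSubgroup V) (hdual : ∀ l ∈ P, ∀ q ∈ Qv, ∃ m : ℤ, (inner ℝ l q : ℝ) = m)
    (Q : Set V) (hQ : Q = {v : V | ∀ p ∈ Pv, ∃ m : ℤ, (inner ℝ v p : ℝ) = m})
    (ρ : V) (hρ : ∀ w : W, ρ - (w : V ≃ₗᵢ[ℝ] V) ρ ∈ P)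
    (ρv : V) (hρv : ∀ w : W, ρv - (w : V ≃ₗᵢ[ℝ] V) ρv ∈ Pv)
    (b b' : V) (hb : b - ρ ∈ P) (hb' : b' - ρ ∈ P)
    (Y : Finset V)
    (hY : Set.BijOn (fun y => (QuotientAddGroup.mk y : V ⧸ Qv)) ↑Y
      {x : V ⧸ Qv | ∃ v : V, (M : ℝ) • v - ρv ∈ Pv ∧ QuotientAddGroup.mk v = x})
    (hne : ∀ w : W, ¬ ∃ q ∈ Q, b - (w : V ≃ₗᵢ[ℝ] V) b' = (M : ℝ) • q) :
    ∑ y ∈ Y, orbitFn W σ b y * (starRingEnd ℂ) (orbitFn W σ b' y) = 0 :=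
  stmt_17_general W σ M hM Qv Pv hQvW hPvW P hdual Q hQ ρ hρ ρv b b' hb hb' Y hY hne
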